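/- Let V be a finite-dimensional complex inner product space and let F be a linear operator on V with Re ⟪φ, F φ⟫ > 0 for every nonzero φ ∈ V. Then | ∫_{(0,2π)} ⟪ψ, (F − i·cot(α/2)·1)^{-1} ψ⟫ dα | ≤ 2π ‖ψ‖² for every ψ ∈ V. -/

import Mathlib

/-!
With `w = exp (-i α)` one has `i cot (α / 2) = -(1 + w) / (1 - w)`, so
`(F - i cot (α / 2))⁻¹ = (1 - w) ((1 - w) F + (1 + w))⁻¹`. The pencil
`(1 - w) F + (1 + w) = (1 - w) (F + (1 + w) / (1 - w))` stays invertible on the whole closed unit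
disc, because the Cayley transform `(1 + w) / (1 - w)` has nonnegative real part there and `F + μ`
is injective for `Re μ ≥ 0`. Hence `w ↦ (1 - w) ⟪ψ, ((1 - w) F + (1 + w))⁻¹ ψ⟫` is holomorphic on
the closed disc, and the mean value property over the unit circle turns the integral into
`2π ⟪ψ, (F + 1)⁻¹ ψ⟫`. Finally `‖(F + 1) φ‖ ≥ ‖φ‖` for accretive `F`, so `‖(F + 1)⁻¹‖ ≤ 1`.
-/

open MeasureTheory Complex

theorem Ring.inverse_smul {𝕜 A : Type*} [Field 𝕜] [Ring A] [Algebra 𝕜 A] (c : 𝕜) (x : A) :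
    Ring.inverse (c • x) = c⁻¹ • Ring.inverse x := by
  rcases eq_or_ne c 0 with rfl | hc
  · simp
  have hu : IsUnit (algebraMap 𝕜 A c) := (isUnit_iff_ne_zero.2 hc).map _
  have hinv : Ring.inverse (algebraMap 𝕜 A c) = algebraMap 𝕜 A c⁻¹ := by
    simpa using (Ring.inverse_mul_eq_iff_eq_mul _ 1 _ hu).mpr
      (by rw [← map_mul, mul_inv_cancel₀ hc, map_one])
  rw [Algebra.smul_def, Ring.inverse_mul (Or.inl hu), hinv, ← Algebra.commutes, ← Algebra.smul_def]

theorem ContinuousLinearMap.isUnit_of_injective {𝕜 V : Type*} [NontriviallyNormedField 𝕜]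
    [CompleteSpace 𝕜] [NormedAddCommGroup V] [NormedSpace 𝕜 V] [FiniteDimensional 𝕜 V]
    {T : V →L[𝕜] V} (hT : Function.Injective T) : IsUnit T :=
  have := FiniteDimensional.complete 𝕜 V
  T.isUnit_iff_bijective.2 ⟨hT, LinearMap.injective_iff_surjective.1 hT⟩

theorem Complex.re_one_add_div_one_sub_nonneg {w : ℂ} (hw : ‖w‖ ≤ 1) :
    0 ≤ ((1 + w) / (1 - w)).re := by
  -- at `w = 1` the quotient is the junk value `2 / 0 = 0`
  have hsq : w.re * w.re + w.im * w.im ≤ 1 := by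
    rw [← normSq_apply, ← Complex.sq_norm]; nlinarith [norm_nonneg w]
  rw [div_re, ← add_div]
  simp only [add_re, one_re, sub_re, add_im, one_im, sub_im]
  exact div_nonneg (by nlinarith) (normSq_nonneg _)

theorem Complex.one_sub_exp_neg_mul_I_mul_cot {α : ℝ} (hα : Real.sin (α / 2) ≠ 0) :
    (1 - exp (-α * I)) * (I * Real.cot (α / 2)) = -(1 + exp (-α * I)) := by
  have hexp : exp (-α * I) = (Real.cos (α / 2) - Real.sin (α / 2) * I) ^ 2 := by
    rw [show (-α * I : ℂ) = ((-(α / 2) : ℝ) : ℂ) * I + ((-(α / 2) : ℝ) : ℂ) * I by push_cast; ring,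
      exp_add, ← sq, exp_mul_I, ← ofReal_cos, ← ofReal_sin, Real.cos_neg, Real.sin_neg, ofReal_neg]
    ring
  have hs : (Real.sin (α / 2) : ℂ) ≠ 0 := ofReal_ne_zero.2 hα
  have hpyth : (Real.cos (α / 2) : ℂ) ^ 2 + (Real.sin (α / 2) : ℂ) ^ 2 = 1 := by
    exact_mod_cast Real.cos_sq_add_sin_sq (α / 2)
  rw [hexp, Real.cot_eq_cos_div_sin, ofReal_div]
  field_simp
  set c : ℂ := ((Real.cos (α / 2) : ℝ) : ℂ)
  set s : ℂ := ((Real.sin (α / 2) : ℝ) : ℂ)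
  linear_combination (-(c * I + s)) * hpyth + (-c * I * s ^ 2 + 2 * c ^ 2 * s + s ^ 3) * I_sq

section Accretive

variable {V : Type*} [NormedAddCommGroup V] [InnerProductSpace ℂ V] {F : V →L[ℂ] V}

theorem norm_le_norm_apply_add_self (hF : ∀ φ : V, 0 ≤ (inner ℂ φ (F φ)).re) (φ : V) :
    ‖φ‖ ≤ ‖F φ + φ‖ := by
  have h : ‖φ‖ ^ 2 ≤ ‖φ‖ * ‖F φ + φ‖ := calc
    ‖φ‖ ^ 2 ≤ (inner ℂ φ (F φ + φ)).re := by
      have hre : (inner ℂ φ φ).re = ‖φ‖ ^ 2 := inner_self_eq_norm_sq (𝕜 := ℂ) φ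
      rw [inner_add_right, add_re, hre]
      linarith [hF φ]
    _ ≤ ‖inner ℂ φ (F φ + φ)‖ := re_le_norm _
    _ ≤ ‖φ‖ * ‖F φ + φ‖ := norm_inner_le_norm _ _
  rcases (norm_nonneg φ).eq_or_lt with h0 | hpos
  · exact h0 ▸ norm_nonneg _
  · exact le_of_mul_le_mul_left (sq ‖φ‖ ▸ h) hpos

variable (hF : ∀ φ : V, φ ≠ 0 → 0 < (inner ℂ φ (F φ)).re)
include hF

theorem injective_add_smul_one {μ : ℂ} (hμ : 0 ≤ μ.re) :
    Function.Injective (F + μ • (1 : V →L[ℂ] V)) := by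
  refine (injective_iff_map_eq_zero _).2 fun v hv => by_contra fun hv0 => ?_
  have hFv : F v = -(μ • v) := eq_neg_of_add_eq_zero_left hv
  have hvv : inner ℂ v v = ((‖v‖ ^ 2 : ℝ) : ℂ) := by
    exact_mod_cast inner_self_eq_norm_sq_to_K (𝕜 := ℂ) v
  have := hF v hv0
  rw [hFv, inner_neg_right, inner_smul_right, hvv, neg_re, re_mul_ofReal] at this
  nlinarith [sq_nonneg ‖v‖]

variable [FiniteDimensional ℂ V]

theorem isUnit_one_sub_smul_add_one_add_smul {w : ℂ} (hw : ‖w‖ ≤ 1) :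
    IsUnit ((1 - w) • F + (1 + w) • (1 : V →L[ℂ] V)) := by
  rcases eq_or_ne w 1 with rfl | hw1
  · rw [sub_self, zero_smul, zero_add]
    exact (isUnit_smul_iff (Units.mk0 (1 + 1 : ℂ) (by norm_num)) 1).2 isUnit_one
  have hw1' : 1 - w ≠ 0 := sub_ne_zero.2 hw1.symm
  have h : (1 - w) • F + (1 + w) • (1 : V →L[ℂ] V)
      = Units.mk0 (1 - w) hw1' • (F + ((1 + w) / (1 - w)) • 1) := by
    rw [Units.smul_def, Units.val_mk0, smul_add, smul_smul, mul_div_cancel₀ _ hw1']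
  rw [h, isUnit_smul_iff]
  exact ContinuousLinearMap.isUnit_of_injective
    (injective_add_smul_one hF (re_one_add_div_one_sub_nonneg hw))

theorem norm_inverse_add_one_apply_le (x : V) : ‖Ring.inverse (F + 1) x‖ ≤ ‖x‖ := by
  have hacc : ∀ φ : V, 0 ≤ (inner ℂ φ (F φ)).re := fun φ => by
    rcases eq_or_ne φ 0 with rfl | hφ
    · simp
    · exact (hF φ hφ).le
  have hu : IsUnit (F + 1) := by
    simpa using isUnit_one_sub_smul_add_one_add_smul hF (w := 0) (by simp)
  calc ‖Ring.inverse (F + 1) x‖ ≤ ‖(F + 1) (Ring.inverse (F + 1) x)‖ :=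
        norm_le_norm_apply_add_self hacc _
    _ = ‖x‖ := by rw [← mul_apply_eq_comp, Ring.mul_inverse_cancel _ hu, one_apply_eq_self]

end Accretive

section CayleyForm

variable {V : Type*} [NormedAddCommGroup V] [InnerProductSpace ℂ V]

noncomputable def cayleyResolventForm (F : V →L[ℂ] V) (ψ : V) (w : ℂ) : ℂ :=
  (1 - w) * inner ℂ ψ (Ring.inverse ((1 - w) • F + (1 + w) • (1 : V →L[ℂ] V)) ψ)

theorem cayleyResolventForm_exp_neg_mul_I (F : V →L[ℂ] V) (ψ : V) {α : ℝ}
    (hα : Real.sin (α / 2) ≠ 0) :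
    cayleyResolventForm F ψ (exp (-α * I))
      = inner ℂ ψ (Ring.inverse (F - (I * Real.cot (α / 2)) • (1 : V →L[ℂ] V)) ψ) := by
  set w := exp (-α * I)
  have key : (1 - w) * (I * Real.cot (α / 2)) = -(1 + w) := one_sub_exp_neg_mul_I_mul_cot hα
  have hw : 1 - w ≠ 0 := by
    intro h
    have hw1 : w = 1 := by linear_combination -h
    rw [h, zero_mul, hw1] at key
    norm_num at key
  have hpencil : (1 - w) • F + (1 + w) • (1 : V →L[ℂ] V)
      = (1 - w) • (F - (I * Real.cot (α / 2)) • 1) := by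
    rw [smul_sub, smul_smul, key, neg_smul, sub_neg_eq_add]
  rw [cayleyResolventForm, hpencil, Ring.inverse_smul, smul_apply,
    inner_smul_right, ← mul_assoc, mul_inv_cancel₀ hw, one_mul]

theorem cayleyResolventForm_zero (F : V →L[ℂ] V) (ψ : V) :
    cayleyResolventForm F ψ 0 = inner ℂ ψ (Ring.inverse (F + 1) ψ) := by
  simp [cayleyResolventForm]

variable [FiniteDimensional ℂ V] {F : V →L[ℂ] V} (hF : ∀ φ : V, φ ≠ 0 → 0 < (inner ℂ φ (F φ)).re)
include hF

theorem differentiableAt_cayleyResolventForm (ψ : V) {w : ℂ} (hw : ‖w‖ ≤ 1) :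
    DifferentiableAt ℂ (cayleyResolventForm F ψ) w := by
  have hinv : DifferentiableAt ℂ
      (fun w : ℂ => Ring.inverse ((1 - w) • F + (1 + w) • (1 : V →L[ℂ] V))) w :=
    DifferentiableAt.inverse (by fun_prop) (isUnit_one_sub_smul_add_one_add_smul hF hw)
  have happ : DifferentiableAt ℂ
      (fun w : ℂ => innerSL ℂ ψ (Ring.inverse ((1 - w) • F + (1 + w) • (1 : V →L[ℂ] V)) ψ)) w := by
    fun_prop
  exact (differentiableAt_id.const_sub 1).mul happ

theorem setIntegral_inner_inverse_sub_I_mul_cot (ψ : V) :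
    ∫ α in Set.Ioo 0 (2 * Real.pi),
        inner ℂ ψ (Ring.inverse (F - (I * Real.cot (α / 2)) • (1 : V →L[ℂ] V)) ψ)
      = 2 * Real.pi * inner ℂ ψ (Ring.inverse (F + 1) ψ) := by
  have hdiff : DiffContOnCl ℂ (cayleyResolventForm F ψ) (Metric.ball 0 |1|) := by
    refine DifferentiableOn.diffContOnCl fun w hw => ?_
    rw [abs_one, closure_ball 0 one_ne_zero, mem_closedBall_zero_iff] at hw
    exact (differentiableAt_cayleyResolventForm hF ψ hw).differentiableWithinAt
  have hmean := hdiff.circleAverage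
  rw [← Real.circleAverage_zero_one_congr_inv, Real.circleAverage_def] at hmean
  calc ∫ α in Set.Ioo 0 (2 * Real.pi),
          inner ℂ ψ (Ring.inverse (F - (I * Real.cot (α / 2)) • (1 : V →L[ℂ] V)) ψ)
      = ∫ α in Set.Ioo 0 (2 * Real.pi), cayleyResolventForm F ψ (circleMap 0 1 α)⁻¹ := by
        refine setIntegral_congr_fun measurableSet_Ioo fun α ⟨h0, h2π⟩ => ?_
        rw [circleMap_zero, ofReal_one, one_mul, ← exp_neg, ← neg_mul,
          cayleyResolventForm_exp_neg_mul_I]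
        exact (Real.sin_pos_of_pos_of_lt_pi (by linarith) (by linarith)).ne'
    _ = ∫ α in 0..2 * Real.pi, cayleyResolventForm F ψ (circleMap 0 1 α)⁻¹ := by
        rw [intervalIntegral.integral_of_le Real.two_pi_pos.le, integral_Ioc_eq_integral_Ioo]
    _ = 2 * Real.pi * cayleyResolventForm F ψ 0 := by
        rw [← hmean, real_smul]
        push_cast
        field_simp
    _ = 2 * Real.pi * inner ℂ ψ (Ring.inverse (F + 1) ψ) := by
        rw [cayleyResolventForm_zero]

end CayleyForm

/-- For a strictly accretive operator `F` on a finite-dimensional complex inner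
product space, `| ∫_{(0,2π)} ⟪ψ, (F − i·cot(α/2)·1)⁻¹ ψ⟫ dα | ≤ 2π ‖ψ‖²`. -/
theorem stmt_10 {V : Type*} [NormedAddCommGroup V] [InnerProductSpace ℂ V]
    [FiniteDimensional ℂ V]
    (F : V →L[ℂ] V)
    (hF : ∀ φ : V, φ ≠ 0 → 0 < ((inner ℂ φ (F φ) : ℂ)).re) (ψ : V) :
    ‖(∫ α in Set.Ioo (0 : ℝ) (2 * Real.pi),
        (inner ℂ ψ ((Ring.inverse
          (F - (Complex.I * (Real.cot (α / 2) : ℂ)) • (1 : V →L[ℂ] V))) ψ) : ℂ))‖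
      ≤ 2 * Real.pi * ‖ψ‖ ^ 2 := by
  rw [setIntegral_inner_inverse_sub_I_mul_cot hF ψ, norm_mul, norm_mul, Complex.norm_two,
    norm_real, Real.norm_of_nonneg Real.pi_pos.le, sq]
  refine mul_le_mul_of_nonneg_left ?_ Real.two_pi_pos.le
  calc ‖inner ℂ ψ (Ring.inverse (F + 1) ψ)‖ ≤ ‖ψ‖ * ‖Ring.inverse (F + 1) ψ‖ :=
        norm_inner_le_norm _ _
    _ ≤ ‖ψ‖ * ‖ψ‖ := by gcongr; exact norm_inverse_add_one_apply_le hF ψ
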